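/- Let u ⊆ {1,…,s} be nonempty and suppose C_{u,1_u} (the |u|×m matrix whose rows are the first rows of C_j for j ∈ u) has full row rank over F₂. Then for every k ∈ {0,1,…,m−1}^{|u|}, Γ_{u,k} ≤ 2^{t*_u + |u| − 1}. -/

import Mathlib

open Finset

noncomputable section

/-- The bit vector `i⃗ ∈ F₂^m` of the integer `i = Σ_{ℓ=1}^m i_ℓ 2^{ℓ-1}`. -/
def bvec (m : ℕ) (i : ℕ) : Fin m → ZMod 2 :=
  fun ℓ => if Nat.testBit i ℓ.1 then 1 else 0

/-- The `(r+1)`-st row (i.e. `r` with 0-indexing) of an `m × m` matrix over `F₂`,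
as a vector in `F₂^m`; junk value `0` if `r ≥ m` (never used under the hypotheses below). -/
def rowAt (m : ℕ) (A : Matrix (Fin m) (Fin m) (ZMod 2)) (r : ℕ) : Fin m → ZMod 2 :=
  fun ℓ => if h : r < m then A ⟨r, h⟩ ℓ else 0

/-- The stacked matrix `C_{u,k}`: for each `j ∈ u`, the first `k j` rows of `C j`. -/
def stack {m s : ℕ} (C : Fin s → Matrix (Fin m) (Fin m) (ZMod 2))
    (u : Finset (Fin s)) (k : Fin s → ℕ) :
    Matrix ((j : {x // x ∈ u}) × Fin (k j.1)) (Fin m) (ZMod 2) :=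
  fun p => rowAt m (C p.1.1) p.2.1

/-- `∇C_{u,k}`: the matrix whose rows are the `(k j + 1)`-st rows (1-indexed) of `C j`, `j ∈ u`. -/
def grad {m s : ℕ} (C : Fin s → Matrix (Fin m) (Fin m) (ZMod 2))
    (u : Finset (Fin s)) (k : Fin s → ℕ) :
    Matrix {x // x ∈ u} (Fin m) (ZMod 2) :=
  fun j => rowAt m (C j.1) (k j.1)

/-- The coordinate `x_{ij} ∈ [0,1)` of the digital net generated by `C₁,…,C_s`:
`x_{ij} = Σ_{ℓ=1}^m y_ℓ 2^{-ℓ}` where `y = C_j · i⃗` over `F₂`. -/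
def pt {m s : ℕ} (C : Fin s → Matrix (Fin m) (Fin m) (ZMod 2)) (i : ℕ) (j : Fin s) : ℝ :=
  ∑ ℓ : Fin m, (((C j).mulVec (bvec m i) ℓ).val : ℝ) / 2 ^ (ℓ.1 + 1)

/-- The factor `N`: with `M(x,x') = max{k ∈ ℕ₀ : ⌊2^k x⌋ = ⌊2^k x'⌋}` (the number of matching
leading binary digits), `Nf x x' c` equals `1` if `M(x,x') > c` (equivalently the first `c+1`
binary digits match), `-1` if `M(x,x') = c` (the first `c` digits match but not `c+1`), and
`0` if `M(x,x') < c`. -/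
def Nf (x x' : ℝ) (c : ℕ) : ℤ :=
  if ⌊(2:ℝ) ^ (c + 1) * x⌋ = ⌊(2:ℝ) ^ (c + 1) * x'⌋ then 1
  else if ⌊(2:ℝ) ^ c * x⌋ = ⌊(2:ℝ) ^ c * x'⌋ then -1
  else 0

/-- The gain coefficient `Γ_{u,k} = 2^{-m} Σ_{i=0}^{2^m-1} Σ_{i'=0}^{2^m-1} ∏_{j∈u} N_{i,i',j}`. -/
def Gam {m s : ℕ} (C : Fin s → Matrix (Fin m) (Fin m) (ZMod 2))
    (u : Finset (Fin s)) (k : Fin s → ℕ) : ℚ :=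
  (2 ^ m : ℚ)⁻¹ * ∑ i ∈ Finset.range (2 ^ m), ∑ i' ∈ Finset.range (2 ^ m),
      ∏ j ∈ u, (Nf (pt C i j) (pt C i' j) (k j) : ℚ)

/-- `t*_u = m + 1 - min{|k| : 1 ≤ k_j ≤ m for all j ∈ u, C_{u,k} not of full row rank}`,
with the convention that the minimum over the empty set is `m+1`. -/
def tStar {m s : ℕ} (C : Fin s → Matrix (Fin m) (Fin m) (ZMod 2))
    (u : Finset (Fin s)) : ℕ :=
  m + 1 - sInf ({K : ℕ | ∃ k : Fin s → ℕ, (∀ j ∈ u, 1 ≤ k j ∧ k j ≤ m) ∧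
      K = ∑ j ∈ u, k j ∧ (stack C u k).rank ≠ ∑ j ∈ u, k j} ∪ {m + 1})

/-!
Write `χ_c(y, y')` for the indicator that the first `c` binary digits of `y` and `y'` agree.
Then `N = 2 χ_{k_j+1} - χ_{k_j}`, and for the net points `χ_c` says that the first `c` rows
of `C_j` annihilate `i⃗ - i⃗'`. So a product of indicators over `j ∈ u` counts the pairs
`(i, i')` with `i⃗ - i⃗'` in the kernel of a stacked matrix `C_{u,c}`, of which there are
`2^m · 2^(m - rank C_{u,c})`.

Let `K = m + 1 - t*_u`, the least sum of a rank-deficient `C_{u,c}`; full rank of `C_{u,1_u}`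
gives `|u| < K`. If `|k| + |u| < K`, expanding the product over `j` writes `Γ_{u,k}` as a sum
over `v ⊆ u` in which every `C_{u,c}` has full rank, so it reduces to `Σ_v (-1)^|v| = 0`.
Otherwise `|N| ≤ χ_{k_j}` gives `Γ_{u,k} ≤ 2^(m - rank C_{u,k})`, and `C_{u,k}` contains a
full-rank `C_{u,g}` with `|g| = K - |u|`: raising the zero entries of `g` to `1` keeps its sum
below `K`.
-/

open Matrix

namespace DigitalNet

variable {m : ℕ}

def digit (y : Fin m → ZMod 2) (ℓ : ℕ) : ℕ :=
  if h : ℓ < m then (y ⟨ℓ, h⟩).val else 0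

def prefixValue (y : Fin m → ZMod 2) : ℕ → ℕ
  | 0 => 0
  | c + 1 => 2 * prefixValue y c + digit y c

def binaryValue (y : Fin m → ZMod 2) : ℝ :=
  ∑ ℓ : Fin m, ((y ℓ).val : ℝ) / 2 ^ (ℓ.1 + 1)

lemma digit_le_one (y : Fin m → ZMod 2) (ℓ : ℕ) : digit y ℓ ≤ 1 := by
  unfold digit
  split
  · exact Nat.le_of_lt_succ (ZMod.val_lt _)
  · exact zero_le_one

lemma prefixValue_add_div (y : Fin m → ZMod 2) (c d : ℕ) :
    prefixValue y (c + d) / 2 ^ d = prefixValue y c := by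
  induction d with
  | zero => simp
  | succ d ih =>
    have := digit_le_one y (c + d)
    rw [← add_assoc, prefixValue, pow_succ', ← Nat.div_div_eq_div_mul, ← ih]
    congr 1
    omega

lemma prefixValue_div_two_pow (y : Fin m → ZMod 2) (c : ℕ) :
    (prefixValue y c : ℝ) / 2 ^ c = ∑ ℓ ∈ range c, (digit y ℓ : ℝ) / 2 ^ (ℓ + 1) := by
  induction c with
  | zero => simp [prefixValue]
  | succ c ih =>
    rw [sum_range_succ, ← ih, prefixValue]
    push_cast
    field_simp
    ring

lemma binaryValue_eq (y : Fin m → ZMod 2) : binaryValue y = prefixValue y m / 2 ^ m := by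
  rw [prefixValue_div_two_pow, ← Fin.sum_univ_eq_sum_range]
  simp [binaryValue, digit]

lemma floor_two_pow_mul_binaryValue (y : Fin m → ZMod 2) {c : ℕ} (hc : c ≤ m) :
    ⌊2 ^ c * binaryValue y⌋ = prefixValue y c := by
  obtain ⟨d, rfl⟩ := Nat.exists_eq_add_of_le hc
  have hscale : (2 : ℝ) ^ c * binaryValue y = (prefixValue y (c + d) : ℝ) / (2 ^ d : ℕ) := by
    rw [binaryValue_eq, pow_add]
    push_cast
    field_simp
  rw [hscale, Int.floor_div_natCast, Int.floor_natCast, ← prefixValue_add_div y c d]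
  push_cast
  rfl

lemma prefixValue_eq_iff (y y' : Fin m → ZMod 2) {c : ℕ} (hc : c ≤ m) :
    prefixValue y c = prefixValue y' c ↔ ∀ ℓ : Fin m, ℓ.1 < c → y ℓ = y' ℓ := by
  induction c with
  | zero => simp [prefixValue]
  | succ c ih =>
    have hc' : c < m := hc
    have h := digit_le_one y c
    have h' := digit_le_one y' c
    have hdigit : digit y c = digit y' c ↔ y ⟨c, hc'⟩ = y' ⟨c, hc'⟩ := by
      simp only [digit, dif_pos hc']
      exact (ZMod.val_injective 2).eq_iff
    have hstep : 2 * prefixValue y c + digit y c = 2 * prefixValue y' c + digit y' c ↔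
        prefixValue y c = prefixValue y' c ∧ digit y c = digit y' c := by
      omega
    rw [prefixValue, prefixValue, hstep, ih hc'.le, hdigit]
    constructor
    · rintro ⟨hlt, hc⟩ ℓ hℓ
      rcases Nat.lt_succ_iff_lt_or_eq.mp hℓ with hℓ | hℓ
      · exact hlt ℓ hℓ
      · exact (Fin.ext hℓ : ℓ = ⟨c, hc'⟩) ▸ hc
    · intro h
      exact ⟨fun ℓ hℓ => h ℓ (Nat.lt_succ_of_lt hℓ), h _ (Nat.lt_succ_self c)⟩

lemma floor_eq_iff_forall_eq (y y' : Fin m → ZMod 2) {c : ℕ} (hc : c ≤ m) :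
    ⌊2 ^ c * binaryValue y⌋ = ⌊2 ^ c * binaryValue y'⌋ ↔ ∀ ℓ : Fin m, ℓ.1 < c → y ℓ = y' ℓ := by
  rw [floor_two_pow_mul_binaryValue y hc, floor_two_pow_mul_binaryValue y' hc, Nat.cast_inj,
    prefixValue_eq_iff y y' hc]

def prefixIndicator (y y' : Fin m → ZMod 2) (c : ℕ) : ℚ :=
  if ∀ ℓ : Fin m, ℓ.1 < c → y ℓ = y' ℓ then 1 else 0

lemma forall_eq_of_lt_succ {y y' : Fin m → ZMod 2} {c : ℕ}
    (h : ∀ ℓ : Fin m, ℓ.1 < c + 1 → y ℓ = y' ℓ) : ∀ ℓ : Fin m, ℓ.1 < c → y ℓ = y' ℓ :=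
  fun ℓ hℓ => h ℓ (Nat.lt_succ_of_lt hℓ)

lemma Nf_binaryValue (y y' : Fin m → ZMod 2) {c : ℕ} (hc : c < m) :
    (Nf (binaryValue y) (binaryValue y') c : ℚ) =
      2 * prefixIndicator y y' (c + 1) - prefixIndicator y y' c := by
  simp only [Nf, prefixIndicator, floor_eq_iff_forall_eq y y' hc,
    floor_eq_iff_forall_eq y y' hc.le]
  split_ifs <;> first | exact absurd (forall_eq_of_lt_succ ‹_›) ‹_› | norm_num

lemma abs_Nf_binaryValue_le (y y' : Fin m → ZMod 2) {c : ℕ} (hc : c < m) :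
    |(Nf (binaryValue y) (binaryValue y') c : ℚ)| ≤ prefixIndicator y y' c := by
  simp only [Nf, prefixIndicator, floor_eq_iff_forall_eq y y' hc,
    floor_eq_iff_forall_eq y y' hc.le]
  split_ifs <;> first | exact absurd (forall_eq_of_lt_succ ‹_›) ‹_› | norm_num

lemma prod_mul_add_mul_eq_sum_powerset {ι R : Type*} [DecidableEq ι] [CommSemiring R]
    (u : Finset ι) (a b : R) (x y : ι → R) :
    ∏ j ∈ u, (a * x j + b * y j) =
      ∑ t ∈ u.powerset, a ^ #t * b ^ #(u \ t) * ∏ j ∈ u, if j ∈ t then x j else y j := by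
  rw [prod_add]
  refine sum_congr rfl fun t ht => ?_
  rw [prod_ite, filter_mem_eq_inter, inter_eq_right.mpr (mem_powerset.mp ht),
    filter_notMem_eq_sdiff, prod_mul_distrib, prod_mul_distrib, prod_const, prod_const]
  ring

lemma sum_range_bvec {M : Type*} [AddCommMonoid M] (f : (Fin m → ZMod 2) → M) :
    ∑ i ∈ range (2 ^ m), f (bvec m i) = ∑ w, f w := by
  have hbvec : ∀ i : Fin (2 ^ m), bvec m i = finFunctionFinEquiv.symm i := by
    intro i
    funext ℓ
    apply Fin.ext
    rw [finFunctionFinEquiv_symm_apply_val, bvec, Nat.testBit_eq_decide_div_mod_eq]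
    have := Nat.mod_two_eq_zero_or_one (i / 2 ^ ℓ.1)
    split_ifs with h <;> simp_all <;> rfl
  rw [sum_range fun i => f (bvec m i)]
  simp_rw [hbvec]
  exact Equiv.sum_comp finFunctionFinEquiv.symm f

lemma card_ker_mul_pow_rank {F ι n : Type*} [Field F] [Fintype F] [DecidableEq F] [Fintype ι]
    [Fintype n] [DecidableEq n] (A : Matrix ι n F) :
    #{w | A *ᵥ w = 0} * Fintype.card F ^ A.rank = Fintype.card F ^ Fintype.card n := by
  have hcard : #{w | A *ᵥ w = 0} = Nat.card (LinearMap.ker A.mulVecLin) := by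
    rw [← Fintype.card_subtype, Fintype.card_eq_nat_card]
    rfl
  simp only [hcard, Fintype.card_eq_nat_card]
  rw [Module.natCard_eq_pow_finrank (K := F), ← pow_add, Matrix.rank, add_comm,
    LinearMap.finrank_range_add_finrank_ker, Module.finrank_fintype_fun_eq_card,
    Fintype.card_eq_nat_card]

lemma sum_sum_ite_mulVec_sub_eq_zero {ι : Type*} [Fintype ι] (A : Matrix ι (Fin m) (ZMod 2)) :
    ∑ i ∈ range (2 ^ m), ∑ i' ∈ range (2 ^ m),
        (if A *ᵥ (bvec m i - bvec m i') = 0 then (1 : ℚ) else 0) = 2 ^ m * 2 ^ m / 2 ^ A.rank := by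
  have hinner : ∀ i, ∑ i' ∈ range (2 ^ m),
      (if A *ᵥ (bvec m i - bvec m i') = 0 then (1 : ℚ) else 0) = #{z | A *ᵥ z = 0} := by
    intro i
    rw [sum_range_bvec fun w' => if A *ᵥ (bvec m i - w') = 0 then (1 : ℚ) else 0, ← sum_boole]
    exact Fintype.sum_equiv (Equiv.subLeft (bvec m i)) _ _ fun _ => rfl
  have hker := card_ker_mul_pow_rank A
  rw [ZMod.card, Fintype.card_fin] at hker
  rw [sum_congr rfl fun i _ => hinner i, sum_const, card_range, nsmul_eq_mul,
    eq_div_iff (by positivity), mul_assoc]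
  exact_mod_cast congrArg (2 ^ m * ·) hker

lemma exists_le_sum_eq {ι : Type*} [DecidableEq ι] (u : Finset ι) (f : ι → ℕ) {n : ℕ}
    (hn : n ≤ ∑ j ∈ u, f j) : ∃ g : ι → ℕ, (∀ j, g j ≤ f j) ∧ ∑ j ∈ u, g j = n := by
  induction u using Finset.cons_induction generalizing n with
  | empty => exact ⟨0, fun _ => Nat.zero_le _, by simp_all⟩
  | cons a u ha ih =>
    rw [sum_cons] at hn
    obtain ⟨g, hgf, hg⟩ := ih (n := n - min n (f a)) (by omega)
    refine ⟨Function.update g a (min n (f a)), fun j => ?_, ?_⟩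
    · rcases eq_or_ne j a with rfl | hj
      · simp
      · simpa [hj] using hgf j
    · rw [sum_cons, Function.update_self, sum_congr rfl fun j hj =>
        Function.update_of_ne (ne_of_mem_of_not_mem hj ha) _ _, hg]
      omega

section Stack

variable {s : ℕ} (C : Fin s → Matrix (Fin m) (Fin m) (ZMod 2)) (u : Finset (Fin s))

lemma stack_mulVec_eq_zero_iff {c : Fin s → ℕ} (hc : ∀ j ∈ u, c j ≤ m) (w : Fin m → ZMod 2) :
    stack C u c *ᵥ w = 0 ↔ ∀ j ∈ u, ∀ ℓ : Fin m, ℓ.1 < c j → (C j *ᵥ w) ℓ = 0 := by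
  have hrow : ∀ (j : u) (r : Fin (c j)),
      (stack C u c *ᵥ w) ⟨j, r⟩ = (C j *ᵥ w) ⟨r, r.2.trans_le (hc j j.2)⟩ := by
    intro j r
    simp [stack, rowAt, Matrix.mulVec, dotProduct, r.2.trans_le (hc j j.2)]
  simp only [funext_iff, Pi.zero_apply, Sigma.forall, Subtype.forall, hrow]
  exact forall₂_congr fun j hj => ⟨fun h ℓ hℓ => h ⟨ℓ, hℓ⟩, fun h r => h _ r.2⟩

lemma prod_prefixIndicator_mulVec {c : Fin s → ℕ} (hc : ∀ j ∈ u, c j ≤ m)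
    (a b : Fin m → ZMod 2) :
    ∏ j ∈ u, prefixIndicator (C j *ᵥ a) (C j *ᵥ b) (c j) =
      if stack C u c *ᵥ (a - b) = 0 then 1 else 0 := by
  have hiff : (∀ j ∈ u, ∀ ℓ : Fin m, ℓ.1 < c j → (C j *ᵥ a) ℓ = (C j *ᵥ b) ℓ) ↔
      stack C u c *ᵥ (a - b) = 0 := by
    rw [stack_mulVec_eq_zero_iff C u hc]
    simp only [mulVec_sub, Pi.sub_apply, sub_eq_zero]
  simp only [prefixIndicator, prod_boole, hiff]

lemma stack_eq_submatrix {c' c : Fin s → ℕ} (h : ∀ j ∈ u, c' j ≤ c j) :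
    stack C u c' = (stack C u c).submatrix (Sigma.map id fun j => Fin.castLE (h j j.2)) id :=
  rfl

lemma rank_stack_mono {c' c : Fin s → ℕ} (h : ∀ j ∈ u, c' j ≤ c j) :
    (stack C u c').rank ≤ (stack C u c).rank :=
  stack_eq_submatrix C u h ▸ rank_submatrix_le _ _ _

lemma linearIndependent_stack_of_le {c' c : Fin s → ℕ} (h : ∀ j ∈ u, c' j ≤ c j)
    (hli : LinearIndependent (ZMod 2) (stack C u c).row) :
    LinearIndependent (ZMod 2) (stack C u c').row := by
  rw [stack_eq_submatrix C u h]
  exact hli.comp _ (Function.injective_id.sigma_map fun j => Fin.castLE_injective (h j j.2))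

lemma rank_stack_eq_sum_iff (c : Fin s → ℕ) :
    (stack C u c).rank = ∑ j ∈ u, c j ↔ LinearIndependent (ZMod 2) (stack C u c).row := by
  have hcard : Fintype.card ((j : u) × Fin (c j)) = ∑ j ∈ u, c j := by
    simp [Fintype.card_sigma, sum_attach u c]
  rw [← hcard, rank_eq_finrank_span_row, linearIndependent_iff_card_eq_finrank_span,
    Set.finrank, eq_comm]

def minDeficientSum : ℕ :=
  sInf ({K : ℕ | ∃ k : Fin s → ℕ, (∀ j ∈ u, 1 ≤ k j ∧ k j ≤ m) ∧
      K = ∑ j ∈ u, k j ∧ (stack C u k).rank ≠ ∑ j ∈ u, k j} ∪ {m + 1})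

lemma tStar_eq : tStar C u = m + 1 - minDeficientSum C u := rfl

lemma minDeficientSum_le : minDeficientSum C u ≤ m + 1 :=
  Nat.sInf_le (Or.inr rfl)

lemma linearIndependent_stack_of_sum_lt {c : Fin s → ℕ} (hc : ∀ j ∈ u, 1 ≤ c j ∧ c j ≤ m)
    (hlt : ∑ j ∈ u, c j < minDeficientSum C u) : LinearIndependent (ZMod 2) (stack C u c).row := by
  rw [← rank_stack_eq_sum_iff]
  by_contra hne
  exact hlt.not_ge (Nat.sInf_le (Or.inl ⟨c, hc, rfl, hne⟩))

lemma card_lt_minDeficientSum (hfull : (stack C u fun _ => 1).rank = u.card) :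
    u.card < minDeficientSum C u := by
  have hli : LinearIndependent (ZMod 2) (stack C u fun _ => 1).row := by
    rw [← rank_stack_eq_sum_iff, hfull, card_eq_sum_ones]
  refine Nat.lt_of_succ_le (le_csInf ⟨m + 1, Or.inr rfl⟩ ?_)
  rintro K (⟨c, hc, rfl, hrank⟩ | rfl)
  · by_contra! hle
    have hc1 : ∀ j ∈ u, c j ≤ 1 := by
      by_contra! ⟨j₀, hj₀, hj₀c⟩
      have := sum_lt_sum (fun j hj => (hc j hj).1) ⟨j₀, hj₀, hj₀c⟩
      rw [← card_eq_sum_ones] at this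
      omega
    exact hrank ((rank_stack_eq_sum_iff C u c).mpr (linearIndependent_stack_of_le C u hc1 hli))
  · have := rank_le_card_width (stack C u fun _ => 1)
    rw [hfull, Fintype.card_fin] at this
    omega

lemma min_le_rank_stack {k : Fin s → ℕ} (hk : ∀ j ∈ u, k j ≤ m) :
    min (∑ j ∈ u, k j) (minDeficientSum C u - u.card) ≤ (stack C u k).rank := by
  obtain ⟨g, hgk, hg⟩ := exists_le_sum_eq u k (min_le_left _ (minDeficientSum C u - u.card))
  rcases Nat.eq_zero_or_pos (min (∑ j ∈ u, k j) (minDeficientSum C u - u.card)) with h0 | hpos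
  · exact h0 ▸ Nat.zero_le _
  obtain ⟨j₀, hj₀, hgj₀⟩ := exists_ne_zero_of_sum_ne_zero (hg.trans_ne hpos.ne')
  have hm : 1 ≤ m := by have := hgk j₀; have := hk j₀ hj₀; omega
  have hlt : ∑ j ∈ u, max (g j) 1 < ∑ j ∈ u, (g j + 1) :=
    sum_lt_sum (fun j _ => by omega) ⟨j₀, hj₀, by omega⟩
  rw [sum_add_distrib, hg, ← card_eq_sum_ones] at hlt
  have hli : LinearIndependent (ZMod 2) (stack C u fun j => max (g j) 1).row :=
    linearIndependent_stack_of_sum_lt C u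
      (fun j hj => ⟨le_max_right _ _, max_le ((hgk j).trans (hk j hj)) hm⟩) (by omega)
  have hrank_g : (stack C u g).rank = ∑ j ∈ u, g j := (rank_stack_eq_sum_iff C u g).mpr
    (linearIndependent_stack_of_le C u (fun j _ => le_max_left _ _) hli)
  calc _ = (stack C u g).rank := by rw [hrank_g, hg]
    _ ≤ (stack C u k).rank := rank_stack_mono C u fun j _ => hgk j

lemma pt_eq_binaryValue (i : ℕ) (j : Fin s) : pt C i j = binaryValue (C j *ᵥ bvec m i) := rfl

lemma sum_sum_prod_prefixIndicator {c : Fin s → ℕ} (hc : ∀ j ∈ u, c j ≤ m) :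
    ∑ i ∈ range (2 ^ m), ∑ i' ∈ range (2 ^ m),
        ∏ j ∈ u, prefixIndicator (C j *ᵥ bvec m i) (C j *ᵥ bvec m i') (c j) =
      2 ^ m * 2 ^ m / 2 ^ (stack C u c).rank := by
  simp_rw [prod_prefixIndicator_mulVec C u hc]
  exact sum_sum_ite_mulVec_sub_eq_zero _

lemma Gam_le_two_pow_div {k : Fin s → ℕ} (hk : ∀ j ∈ u, k j < m) :
    Gam C u k ≤ 2 ^ m / 2 ^ (stack C u k).rank := by
  have hbound : ∀ i i', ∏ j ∈ u, (Nf (pt C i j) (pt C i' j) (k j) : ℚ) ≤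
      ∏ j ∈ u, prefixIndicator (C j *ᵥ bvec m i) (C j *ᵥ bvec m i') (k j) := by
    intro i i'
    calc _ ≤ |∏ j ∈ u, (Nf (pt C i j) (pt C i' j) (k j) : ℚ)| := le_abs_self _
      _ = ∏ j ∈ u, |(Nf (pt C i j) (pt C i' j) (k j) : ℚ)| := abs_prod _ _
      _ ≤ _ := prod_le_prod (fun _ _ => abs_nonneg _) fun j hj => by
        rw [pt_eq_binaryValue, pt_eq_binaryValue]
        exact abs_Nf_binaryValue_le _ _ (hk j hj)
  calc Gam C u k ≤ (2 ^ m)⁻¹ * ∑ i ∈ range (2 ^ m), ∑ i' ∈ range (2 ^ m),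
        ∏ j ∈ u, prefixIndicator (C j *ᵥ bvec m i) (C j *ᵥ bvec m i') (k j) := by
        unfold Gam
        gcongr (2 ^ m)⁻¹ * ?_
        exact sum_le_sum fun i _ => sum_le_sum fun i' _ => hbound i i'
    _ = 2 ^ m / 2 ^ (stack C u k).rank := by
        rw [sum_sum_prod_prefixIndicator C u fun j hj => (hk j hj).le]
        field_simp

lemma Gam_eq_zero {k : Fin s → ℕ} (hu : u.Nonempty) (hk : ∀ j ∈ u, k j < m)
    (hli : LinearIndependent (ZMod 2) (stack C u fun j => k j + 1).row) : Gam C u k = 0 := by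
  set c : Finset (Fin s) → Fin s → ℕ := fun t j => if j ∈ t then k j else k j + 1 with hc_def
  have hcm : ∀ t, ∀ j ∈ u, c t j ≤ m := fun t j hj => by
    have := hk j hj
    simp only [hc_def]
    split_ifs <;> omega
  have hrank : ∀ t ∈ u.powerset, (stack C u (c t)).rank = ∑ j ∈ u, k j + #(u \ t) := by
    intro t ht
    rw [(rank_stack_eq_sum_iff C u (c t)).mpr (linearIndependent_stack_of_le C u
      (fun j _ => by simp only [hc_def]; split_ifs <;> omega) hli)]
    have hsplit : ∀ j, c t j = k j + if j ∈ t then 0 else 1 := fun j => by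
      simp only [hc_def]
      split_ifs <;> rfl
    rw [sum_congr rfl fun j _ => hsplit j, sum_add_distrib, sum_ite, sum_const_zero, zero_add,
      sum_const, smul_eq_mul, mul_one, filter_notMem_eq_sdiff]
  have hexpand : ∀ i i', ∏ j ∈ u, (Nf (pt C i j) (pt C i' j) (k j) : ℚ) =
      ∑ t ∈ u.powerset, (-1) ^ #t * 2 ^ #(u \ t) *
        ∏ j ∈ u, prefixIndicator (C j *ᵥ bvec m i) (C j *ᵥ bvec m i') (c t j) := by
    intro i i'
    rw [prod_congr rfl fun j hj => by
      rw [pt_eq_binaryValue, pt_eq_binaryValue, Nf_binaryValue _ _ (hk j hj), sub_eq_neg_add,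
        neg_eq_neg_one_mul], prod_mul_add_mul_eq_sum_powerset]
    simp only [hc_def, apply_ite]
  have hsign : ∑ t ∈ u.powerset, (-1 : ℚ) ^ #t = 0 := by
    exact_mod_cast sum_powerset_neg_one_pow_card_of_nonempty hu
  calc Gam C u k = (2 ^ m)⁻¹ * ∑ t ∈ u.powerset, (-1) ^ #t * 2 ^ #(u \ t) *
        ∑ i ∈ range (2 ^ m), ∑ i' ∈ range (2 ^ m),
          ∏ j ∈ u, prefixIndicator (C j *ᵥ bvec m i) (C j *ᵥ bvec m i') (c t j) := by
        simp_rw [Gam, hexpand, mul_sum]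
        rw [(sum_congr rfl fun i _ => sum_comm).trans sum_comm]
    _ = 2 ^ m / 2 ^ (∑ j ∈ u, k j) * ∑ t ∈ u.powerset, (-1) ^ #t := by
        rw [mul_sum, mul_sum]
        refine sum_congr rfl fun t ht => ?_
        rw [sum_sum_prod_prefixIndicator C u (hcm t), hrank t ht, pow_add]
        field_simp
    _ = 0 := by rw [hsign, mul_zero]

end Stack

end DigitalNet

open DigitalNet

theorem statement_general (m s : ℕ)
    (C : Fin s → Matrix (Fin m) (Fin m) (ZMod 2))
    (u : Finset (Fin s)) (hu : u.Nonempty)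
    (hfull : (stack C u (fun _ => 1)).rank = u.card)
    (k : Fin s → ℕ) (hk : ∀ j ∈ u, k j ≤ m - 1) :
    Gam C u k ≤ (2 : ℚ) ^ (tStar C u + u.card - 1) := by
  have hcard := card_lt_minDeficientSum C u hfull
  have hK := minDeficientSum_le C u
  have hu1 := card_pos.mpr hu
  have hkm : ∀ j ∈ u, k j < m := fun j hj => by have := hk j hj; omega
  rw [tStar_eq, show m + 1 - minDeficientSum C u + u.card - 1 =
    m + u.card - minDeficientSum C u by omega]
  rcases lt_or_ge (∑ j ∈ u, k j + u.card) (minDeficientSum C u) with hsmall | hlarge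
  · have hli := linearIndependent_stack_of_sum_lt C u (c := fun j => k j + 1)
      (fun j hj => ⟨Nat.le_add_left 1 _, hkm j hj⟩)
      (by rwa [sum_add_distrib, ← card_eq_sum_ones])
    rw [Gam_eq_zero C u hu hkm hli]
    positivity
  · have hrank := min_le_rank_stack C u fun j hj => (hkm j hj).le
    rw [min_eq_right (by omega)] at hrank
    calc Gam C u k ≤ 2 ^ m / 2 ^ (stack C u k).rank := Gam_le_two_pow_div C u hkm
      _ ≤ 2 ^ m / 2 ^ (minDeficientSum C u - u.card) := by gcongr; norm_num
      _ = 2 ^ (m + u.card - minDeficientSum C u) := by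
        rw [div_eq_iff (by positivity), ← pow_add]
        congr 1
        omega

theorem statement (m s : ℕ) (hm : 1 ≤ m) (hs : 1 ≤ s)
    (C : Fin s → Matrix (Fin m) (Fin m) (ZMod 2))
    (u : Finset (Fin s)) (hu : u.Nonempty)
    (hfull : (stack C u (fun _ => 1)).rank = u.card)
    (k : Fin s → ℕ) (hk : ∀ j ∈ u, k j ≤ m - 1) :
    Gam C u k ≤ (2 : ℚ) ^ (tStar C u + u.card - 1) :=
  statement_general m s C u hu hfull k hk
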